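/- Let M ∈ ℝ^{n×m} be a real matrix and let S₁, …, S_c ⊆ {1, …, n} be index sets whose union is all of {1, …, n}. For each k, let M_k denote the row-submatrix of M consisting of the rows of M whose index lies in S_k. Then ‖M‖_* ≤ ∑_{k=1}^c ‖M_k‖_*. -/

import Mathlib

/-- The nuclear norm of a real matrix `M`: the trace of the positive
semidefinite square root of `Mᵀ * M`. -/
noncomputable def nuclearNorm {m n : Type*} [Fintype m] [Fintype n] [DecidableEq n]
    (M : Matrix m n ℝ) : ℝ :=
  (((Matrix.posSemidef_conjTranspose_mul_self M).1.eigenvectorUnitary : Matrix n n ℝ) *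
    Matrix.diagonal ((RCLike.ofReal : ℝ → ℝ) ∘ (√·) ∘ (Matrix.posSemidef_conjTranspose_mul_self M).1.eigenvalues) *
    (star (Matrix.posSemidef_conjTranspose_mul_self M).1.eigenvectorUnitary : Matrix n n ℝ)).trace

/-- The row-submatrix of `M` consisting of the rows whose index lies in `S`. -/
def rowSubmatrix {n m : Type*} (M : Matrix n m ℝ) (S : Finset n) :
    Matrix {i // i ∈ S} m ℝ :=
  M.submatrix (fun i => (i : n)) id


/-!
The nuclear norm is dual to the operator norm: `‖A‖_* = max tr (Aᵀ U)` over contractions `U`,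
the maximum being attained at the polar factor of `A` (the upper bound is Cauchy–Schwarz on the
columns of `A V`, where `V` diagonalises `AᵀA`). Take such a `U` for `M`, assign every row `i` to
some `S_k` containing it, and let `U_k` be the rows of `U` over `S_k`, with the rows not assigned
to `k` replaced by zero. Each `U_k` is again a contraction, and
`tr (Mᵀ U) = ∑ₖ tr (M_kᵀ U_k) ≤ ∑ₖ ‖M_k‖_*`.
-/

namespace Matrix

variable {p q : Type*} [Fintype p] [Fintype q]

def IsContraction (U : Matrix p q ℝ) : Prop :=
  ∀ y : q → ℝ, U *ᵥ y ⬝ᵥ U *ᵥ y ≤ y ⬝ᵥ y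

def maskRows (P : p → Prop) [DecidablePred P] (U : Matrix p q ℝ) : Matrix p q ℝ :=
  of fun i => if P i then U i else 0

lemma dotProduct_conjTranspose_mul_mulVec (A B : Matrix p q ℝ) (x y : q → ℝ) :
    x ⬝ᵥ (Aᴴ * B) *ᵥ y = A *ᵥ x ⬝ᵥ B *ᵥ y := by
  rw [← mulVec_mulVec, dotProduct_mulVec, conjTranspose_eq_transpose_of_trivial,
    vecMul_transpose]

lemma dotProduct_le_sqrt_mul_sqrt (x y : q → ℝ) : x ⬝ᵥ y ≤ √(x ⬝ᵥ x) * √(y ⬝ᵥ y) := by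
  simpa only [dotProduct, sq] using Real.sum_mul_le_sqrt_mul_sqrt Finset.univ x y

lemma diag_eq_single_dotProduct_mulVec [DecidableEq q] (B : Matrix q q ℝ) (j : q) :
    B j j = Pi.single j 1 ⬝ᵥ B *ᵥ Pi.single j 1 := by
  rw [mulVec_single_one, single_one_dotProduct, col_apply]

lemma trace_conjTranspose_mul_eq_sum_dotProduct (A B : Matrix p q ℝ) :
    (Aᴴ * B).trace = ∑ i, A i ⬝ᵥ B i := by
  simp only [trace, diag_apply, mul_apply, conjTranspose_apply, star_trivial, dotProduct]
  exact Finset.sum_comm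

namespace IsContraction

variable {r : Type*} [Fintype r]

lemma mul {U : Matrix p q ℝ} {W : Matrix q r ℝ} (hU : IsContraction U) (hW : IsContraction W) :
    IsContraction (U * W) := fun y => by
  rw [← mulVec_mulVec]
  exact (hU _).trans (hW y)

lemma of_conjTranspose_mul_self_eq_one [DecidableEq q] {U : Matrix p q ℝ} (hU : Uᴴ * U = 1) :
    IsContraction U := fun y => by
  rw [← dotProduct_conjTranspose_mul_mulVec, hU, one_mulVec]

lemma submatrix {U : Matrix p q ℝ} (hU : IsContraction U) {e : r → p}
    (he : Function.Injective e) : IsContraction (U.submatrix e id) := fun y => by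
  have hrow (i : r) : (U.submatrix e id *ᵥ y) i = (U *ᵥ y) (e i) := rfl
  calc U.submatrix e id *ᵥ y ⬝ᵥ U.submatrix e id *ᵥ y
      = ∑ i ∈ Finset.univ.map ⟨e, he⟩, (U *ᵥ y) i * (U *ᵥ y) i := by
        simp only [Finset.sum_map, dotProduct, hrow, Function.Embedding.coeFn_mk]
    _ ≤ U *ᵥ y ⬝ᵥ U *ᵥ y := Finset.sum_le_univ_sum_of_nonneg fun _ => mul_self_nonneg _
    _ ≤ y ⬝ᵥ y := hU y

lemma maskRows {U : Matrix p q ℝ} (hU : IsContraction U) (P : p → Prop) [DecidablePred P] :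
    IsContraction (U.maskRows P) := fun y => by
  refine le_trans (Finset.sum_le_sum fun i _ => ?_) (hU y)
  have hrow : (U.maskRows P *ᵥ y) i = if P i then (U *ᵥ y) i else 0 := by
    by_cases h : P i <;> simp [Matrix.maskRows, mulVec, h]
  rw [hrow]
  split_ifs
  exacts [le_rfl, by simpa using mul_self_nonneg _]

end IsContraction

section Spectral

variable [DecidableEq q]

lemma trace_conjTranspose_mul_le_sum_sqrt {B W : Matrix p q ℝ} {d : q → ℝ}
    (hB : Bᴴ * B = diagonal d) (hW : IsContraction W) :
    (Bᴴ * W).trace ≤ ∑ j, √(d j) := by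
  refine Finset.sum_le_sum fun j _ => ?_
  set e : q → ℝ := Pi.single j 1
  have hBe : B *ᵥ e ⬝ᵥ B *ᵥ e = d j := by
    rw [← dotProduct_conjTranspose_mul_mulVec, hB, ← diag_eq_single_dotProduct_mulVec,
      diagonal_apply_eq]
  have hWe : W *ᵥ e ⬝ᵥ W *ᵥ e ≤ 1 := (hW e).trans_eq (by simp [e])
  calc (Bᴴ * W).diag j = B *ᵥ e ⬝ᵥ W *ᵥ e := by
        rw [diag_apply, diag_eq_single_dotProduct_mulVec (Bᴴ * W),
          dotProduct_conjTranspose_mul_mulVec]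
    _ ≤ √(B *ᵥ e ⬝ᵥ B *ᵥ e) * √(W *ᵥ e ⬝ᵥ W *ᵥ e) := dotProduct_le_sqrt_mul_sqrt _ _
    _ ≤ √(d j) * 1 := by
        rw [hBe]
        gcongr
        exact Real.sqrt_le_one.mpr hWe
    _ = √(d j) := mul_one _

lemma exists_isContraction_trace_conjTranspose_mul_eq_sum_sqrt {B : Matrix p q ℝ} {d : q → ℝ}
    (hB : Bᴴ * B = diagonal d) :
    ∃ W : Matrix p q ℝ, IsContraction W ∧ (Bᴴ * W).trace = ∑ j, √(d j) := by
  -- `W = B D^{-1/2}`; the junk value `(√0)⁻¹ = 0` kills the columns of `B` that vanish.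
  set g : q → ℝ := fun j => (√(d j))⁻¹
  have hdg (j : q) : d j * g j = √(d j) := by rw [← div_eq_mul_inv, Real.div_sqrt]
  refine ⟨B * diagonal g, fun y => ?_, ?_⟩
  · rw [← mulVec_mulVec, ← dotProduct_conjTranspose_mul_mulVec, hB]
    refine Finset.sum_le_sum fun j _ => ?_
    simp only [mulVec_diagonal]
    have hdgg : d j * g j * g j ≤ 1 := by rw [hdg]; exact div_self_le_one _
    nlinarith [mul_self_nonneg (y j)]
  · rw [← Matrix.mul_assoc, hB, diagonal_mul_diagonal, trace_diagonal]
    exact Finset.sum_congr rfl fun j _ => hdg j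

lemma conjTranspose_mul_self_eigenvectorUnitary_eq_diagonal {A : Matrix p q ℝ}
    (hA : (Aᴴ * A).IsHermitian) :
    (A * (hA.eigenvectorUnitary : Matrix q q ℝ))ᴴ * (A * (hA.eigenvectorUnitary : Matrix q q ℝ)) =
      diagonal hA.eigenvalues := by
  have h := hA.conjStarAlgAut_star_eigenvectorUnitary
  rw [Unitary.conjStarAlgAut_star_apply, RCLike.ofReal_real_eq_id, Function.id_comp] at h
  rw [conjTranspose_mul, ← h, star_eq_conjTranspose]
  simp only [Matrix.mul_assoc]

lemma nuclearNorm_eq_sum_sqrt_eigenvalues (A : Matrix p q ℝ) :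
    nuclearNorm A = ∑ j, √((posSemidef_conjTranspose_mul_self A).1.eigenvalues j) := by
  rw [nuclearNorm, trace_mul_cycle, Unitary.coe_star_mul_self, Matrix.one_mul, trace_diagonal]
  simp only [RCLike.ofReal_real_eq_id, Function.comp_apply, id_eq]

lemma trace_conjTranspose_mul_le_nuclearNorm (A : Matrix p q ℝ) {U : Matrix p q ℝ}
    (hU : IsContraction U) : (Aᴴ * U).trace ≤ nuclearNorm A := by
  set hA := (posSemidef_conjTranspose_mul_self A).1
  set V : Matrix q q ℝ := ↑hA.eigenvectorUnitary
  have hV : Vᴴ * V = 1 := by rw [← star_eq_conjTranspose]; exact Unitary.coe_star_mul_self _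
  calc (Aᴴ * U).trace = ((A * V)ᴴ * (U * V)).trace := by
        rw [conjTranspose_mul, Matrix.mul_assoc, trace_mul_comm Vᴴ, Matrix.mul_assoc,
          Matrix.mul_assoc, mul_eq_one_comm.mp hV, Matrix.mul_one]
    _ ≤ ∑ j, √(hA.eigenvalues j) := trace_conjTranspose_mul_le_sum_sqrt
        (conjTranspose_mul_self_eigenvectorUnitary_eq_diagonal hA)
        (hU.mul (.of_conjTranspose_mul_self_eq_one hV))
    _ = nuclearNorm A := (nuclearNorm_eq_sum_sqrt_eigenvalues A).symm

lemma exists_isContraction_trace_conjTranspose_mul_eq_nuclearNorm (A : Matrix p q ℝ) :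
    ∃ U : Matrix p q ℝ, IsContraction U ∧ (Aᴴ * U).trace = nuclearNorm A := by
  set hA := (posSemidef_conjTranspose_mul_self A).1
  set V : Matrix q q ℝ := ↑hA.eigenvectorUnitary
  have hV : V * Vᴴ = 1 := by rw [← star_eq_conjTranspose]; exact Unitary.coe_mul_star_self _
  obtain ⟨W, hW, hWA⟩ := exists_isContraction_trace_conjTranspose_mul_eq_sum_sqrt
    (conjTranspose_mul_self_eigenvectorUnitary_eq_diagonal hA)
  refine ⟨W * Vᴴ, hW.mul (.of_conjTranspose_mul_self_eq_one ?_), ?_⟩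
  · rwa [conjTranspose_conjTranspose]
  · rw [nuclearNorm_eq_sum_sqrt_eigenvalues, ← hWA, ← Matrix.mul_assoc, trace_mul_cycle,
      conjTranspose_mul]

end Spectral

lemma trace_conjTranspose_mul_eq_sum_rowSubmatrix {ι : Type*} [Fintype ι] [DecidableEq ι]
    (A B : Matrix p q ℝ) {S : ι → Finset p} {f : p → ι} (hf : ∀ i, i ∈ S (f i)) :
    (Aᴴ * B).trace =
      ∑ k, ((rowSubmatrix A (S k))ᴴ * rowSubmatrix (B.maskRows (f · = k)) (S k)).trace := by
  simp only [trace_conjTranspose_mul_eq_sum_dotProduct]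
  rw [← Finset.sum_fiberwise Finset.univ f]
  refine Finset.sum_congr rfl fun k _ => ?_
  have hrow (i : S k) : rowSubmatrix A (S k) i ⬝ᵥ rowSubmatrix (B.maskRows (f · = k)) (S k) i =
      if f i = k then A i ⬝ᵥ B i else 0 := by
    split_ifs with h <;> simp [rowSubmatrix, maskRows, dotProduct, h]
  rw [Finset.sum_filter, Finset.sum_congr rfl fun i _ => hrow i,
    Finset.sum_coe_sort (S k) fun i => if f i = k then A i ⬝ᵥ B i else 0]
  refine (Finset.sum_subset (Finset.subset_univ _) fun i _ hi => ?_).symm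
  exact if_neg fun h : f i = k => hi (h ▸ hf i)

end Matrix

open Matrix

theorem nuclearNorm_le_sum_rowSubmatrix (n m c : ℕ)
    (M : Matrix (Fin n) (Fin m) ℝ) (S : Fin c → Finset (Fin n))
    (hS : ∀ i : Fin n, ∃ k : Fin c, i ∈ S k) :
    nuclearNorm M ≤ ∑ k : Fin c, nuclearNorm (rowSubmatrix M (S k)) := by
  choose f hf using hS
  obtain ⟨U, hU, hMU⟩ := exists_isContraction_trace_conjTranspose_mul_eq_nuclearNorm M
  calc nuclearNorm M = (Mᴴ * U).trace := hMU.symm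
    _ = ∑ k, ((rowSubmatrix M (S k))ᴴ * rowSubmatrix (U.maskRows (f · = k)) (S k)).trace :=
        trace_conjTranspose_mul_eq_sum_rowSubmatrix M U hf
    _ ≤ ∑ k, nuclearNorm (rowSubmatrix M (S k)) := Finset.sum_le_sum fun k _ =>
        trace_conjTranspose_mul_le_nuclearNorm _ ((hU.maskRows _).submatrix Subtype.val_injective)
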